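/- For every n ≥ 2, the number o_n of 1s among the first n letters of the classical Kolakoski sequence satisfies n/5 ≤ o_n ≤ 4n/5, and likewise the number t_n of 2s satisfies n/5 ≤ t_n ≤ 4n/5. -/
import Mathlib


/-- Sum of the first `m` letters of `K` (indices `0, …, m-1`), i.e. `K₁ + ⋯ + K_m`
in the paper's 1-indexed notation. -/
def psum (K : ℕ → ℕ) (m : ℕ) : ℕ := ∑ i ∈ Finset.range m, K i

/-- `K` equals the sequence of its own run lengths: the `m`-th run of `K` occupies
exactly the positions in `[psum K m, psum K (m+1))` (hence has length `K m`);
`K` is constant on each such block, and consecutive blocks carry different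
symbols (which is exactly maximality of the runs). -/
def IsRunSelf (K : ℕ → ℕ) : Prop :=
  ∀ m : ℕ,
    (∀ i : ℕ, psum K m ≤ i → i < psum K (m + 1) → K i = K (psum K m)) ∧
    K (psum K m) ≠ K (psum K (m + 1))

/-- The classical Kolakoski sequence, 0-indexed: `K i` is the letter `K_{i+1}` of
the paper.  It takes values in `{1, 2}`, starts with `1`, and equals the
sequence of its own run lengths. -/
def IsKolakoski (K : ℕ → ℕ) : Prop :=
  (∀ n, K n = 1 ∨ K n = 2) ∧ K 0 = 1 ∧ IsRunSelf K

/-- `ones K n` is the number of `1`s among the first `n` letters of `K`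
(the `o_n` of the paper). -/
def ones (K : ℕ → ℕ) (n : ℕ) : ℕ := ((Finset.range n).filter fun i => K i = 1).card

/-- `twos K n` is the number of `2`s among the first `n` letters of `K`
(the `t_n` of the paper). -/
def twos (K : ℕ → ℕ) (n : ℕ) : ℕ := ((Finset.range n).filter fun i => K i = 2).card

lemma psum_succ_eq (K : ℕ → ℕ) (m : ℕ) : psum K (m + 1) = psum K m + K m :=
  Finset.sum_range_succ _ _

/-- every index lies in some run block -/
lemma exists_block (K : ℕ → ℕ) (hpos : ∀ m, 1 ≤ K m) (i : ℕ) :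
    ∃ m, psum K m ≤ i ∧ i < psum K (m + 1) := by
  induction i with
  | zero =>
      exact ⟨0, by simp [psum], by simp [psum, Finset.sum_range_one]; exact hpos 0⟩
  | succ i ih =>
      obtain ⟨m, h1, h2⟩ := ih
      by_cases h : i + 1 < psum K (m + 1)
      · exact ⟨m, by omega, h⟩
      · refine ⟨m + 1, by omega, ?_⟩
        have := psum_succ_eq K (m + 1)
        have := hpos (m + 1)
        omega

/-- no three consecutive equal letters -/
lemma no_three (K : ℕ → ℕ) (hK : IsKolakoski K) (i : ℕ) :
    ¬ (K i = K (i + 1) ∧ K i = K (i + 2)) := by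
  obtain ⟨h12, h0, hrun⟩ := hK
  have hpos : ∀ m, 1 ≤ K m := fun m => by rcases h12 m with h | h <;> omega
  have hle2 : ∀ m, K m ≤ 2 := fun m => by rcases h12 m with h | h <;> omega
  rintro ⟨hA, hB⟩
  obtain ⟨m, h1, h2⟩ := exists_block K hpos i
  have hKi : K i = K (psum K m) := (hrun m).1 i h1 h2
  have hs : psum K (m + 1) = psum K m + K m := psum_succ_eq K m
  have hneq := (hrun m).2
  have hle : psum K (m + 1) ≤ i + 2 := by have := hle2 m; omega
  have hcase : psum K (m + 1) = i + 1 ∨ psum K (m + 1) = i + 2 := by omega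
  rcases hcase with h | h
  · rw [h] at hneq; rw [← hA, hKi] at hneq; exact hneq rfl
  · rw [h] at hneq; rw [← hB, hKi] at hneq; exact hneq rfl

lemma ones_succ (K : ℕ → ℕ) (m : ℕ) :
    ones K (m + 1) = ones K m + (if K m = 1 then 1 else 0) := by
  simp [ones, Finset.range_add_one, Finset.filter_insert]
  split <;> simp [Finset.card_insert_of_notMem]

lemma twos_succ (K : ℕ → ℕ) (m : ℕ) :
    twos K (m + 1) = twos K m + (if K m = 2 then 1 else 0) := by
  simp [twos, Finset.range_add_one, Finset.filter_insert]
  split <;> simp [Finset.card_insert_of_notMem]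

lemma ones_add_twos (K : ℕ → ℕ) (h12 : ∀ n, K n = 1 ∨ K n = 2) (n : ℕ) :
    ones K n + twos K n = n := by
  induction n with
  | zero => simp [ones, twos]
  | succ n ih =>
      rw [ones_succ, twos_succ]
      rcases h12 n with h | h <;> simp [h] <;> omega

lemma ones_step (K : ℕ → ℕ) (hK : IsKolakoski K) (n : ℕ) :
    ones K n + 1 ≤ ones K (n + 3) ∧ twos K n + 1 ≤ twos K (n + 3) := by
  have h3 := no_three K hK n
  have h12 := hK.1
  have e1 : ones K (n + 1) = ones K n + (if K n = 1 then 1 else 0) := ones_succ K n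
  have e2 : ones K (n + 2) = ones K (n + 1) + (if K (n + 1) = 1 then 1 else 0) :=
    ones_succ K (n + 1)
  have e3 : ones K (n + 3) = ones K (n + 2) + (if K (n + 2) = 1 then 1 else 0) :=
    ones_succ K (n + 2)
  have f1 : twos K (n + 1) = twos K n + (if K n = 2 then 1 else 0) := twos_succ K n
  have f2 : twos K (n + 2) = twos K (n + 1) + (if K (n + 1) = 2 then 1 else 0) :=
    twos_succ K (n + 1)
  have f3 : twos K (n + 3) = twos K (n + 2) + (if K (n + 2) = 2 then 1 else 0) :=
    twos_succ K (n + 2)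
  have hx := h12 n; have hy := h12 (n + 1); have hz := h12 (n + 2)
  split_ifs at e1 e2 e3 f1 f2 f3 <;> omega

lemma ones_twos_pos (K : ℕ → ℕ) (hK : IsKolakoski K) :
    1 ≤ ones K 2 ∧ 1 ≤ twos K 2 := by
  obtain ⟨h12, h0, hrun⟩ := hK
  have hp1 : psum K 1 = 1 := by simp [psum, Finset.sum_range_one, h0]
  have hK1 : K 1 = 2 := by
    have := (hrun 0).2
    simp [psum, hp1, h0] at this
    rcases h12 1 with h | h
    · exact absurd h.symm (by simpa [h0] using this)
    · exact h
  have e1 : ones K 1 = ones K 0 + (if K 0 = 1 then 1 else 0) := ones_succ K 0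
  have e2 : ones K 2 = ones K 1 + (if K 1 = 1 then 1 else 0) := ones_succ K 1
  have f1 : twos K 1 = twos K 0 + (if K 0 = 2 then 1 else 0) := twos_succ K 0
  have f2 : twos K 2 = twos K 1 + (if K 1 = 2 then 1 else 0) := twos_succ K 1
  simp [h0, hK1] at e1 e2 f1 f2
  omega

lemma kol_lower (K : ℕ → ℕ) (hK : IsKolakoski K) :
    ∀ n, 2 ≤ n → n ≤ 5 * ones K n ∧ n ≤ 5 * twos K n := by
  intro n
  induction n using Nat.strong_induction_on with
  | _ n ih =>
    intro hn
    have hb := ones_twos_pos K hK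
    by_cases h5 : n < 5
    · have hmono : ∀ a b, a ≤ b → ones K a ≤ ones K b ∧ twos K a ≤ twos K b := by
        intro a b hab
        constructor
        · exact Finset.card_le_card (Finset.filter_subset_filter _
            (Finset.range_subset_range.2 hab))
        · exact Finset.card_le_card (Finset.filter_subset_filter _
            (Finset.range_subset_range.2 hab))
      have := hmono 2 n hn
      omega
    · push_neg at h5
      have h1 : n - 3 < n := by omega
      have h2 : 2 ≤ n - 3 := by omega
      have hih := ih (n - 3) h1 h2
      have hstep := ones_step K hK (n - 3)
      have : n - 3 + 3 = n := by omega
      rw [this] at hstep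
      omega

/-- For every `n ≥ 2`, the number `o_n` of `1`s among the first
`n` letters of the classical Kolakoski sequence satisfies `n/5 ≤ o_n ≤ 4n/5`,
and likewise `n/5 ≤ t_n ≤ 4n/5` for the number of `2`s. -/
theorem kolakoski_count_bounds (K : ℕ → ℕ) (hK : IsKolakoski K)
    (n : ℕ) (hn : 2 ≤ n) :
    (n ≤ 5 * ones K n ∧ 5 * ones K n ≤ 4 * n) ∧
    (n ≤ 5 * twos K n ∧ 5 * twos K n ≤ 4 * n) := by
  have hlow := kol_lower K hK n hn
  have hsum := ones_add_twos K hK.1 n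
  omega
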